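/- Let B = B0 + B1ε ∈ DQ^{k×l} and C = C0 + C1ε ∈ DQ^{n×l} be dual quaternion matrices. Set B2 = R_{B0}·B1, C2 = C1 − C0·B0†·B1, B00 = B2·L_{B0}, C00 = C2·L_{B0}. Then the dual quaternion matrix equation YB = C has a solution Y ∈ DQ^{n×k} if and only if C0·L_{B0} = 0 and C00·L_{B00} = 0. -/

import Mathlib

/-!
Writing `Y = Y0 + Y1 ε`, the equation `Y B = C` splits into `Y0 B0 = C0` and
`Y1 B0 = C1 - Y0 B1`. For an inner inverse `G` of `A` (`A G A = A`), `X A = D` is solvable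
iff `D (1 - G A) = 0`, and then its solutions are `X = D G + W (1 - A G)` with `W` free.
Applying this to the second equation and substituting the general solution of the first one
turns the second solvability condition into `W B00 = C00`, whose solvability is again decided
by the same criterion.
-/

open Matrix

/-- Quaternion matrices of size `p × q`. -/
abbrev QM (p q : ℕ) := Matrix (Fin p) (Fin q) (Quaternion ℝ)

/-- `Ad` is a Moore–Penrose inverse of the quaternion matrix `A`. -/
def IsMP {p q : ℕ} (A : QM p q) (Ad : QM q p) : Prop :=
  A * Ad * A = A ∧ Ad * A * Ad = Ad ∧ (A * Ad)ᴴ = A * Ad ∧ (Ad * A)ᴴ = Ad * A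

/-- The dual quaternion matrix `A0 + A1 ε`, realized as a matrix over the
dual numbers (dual quaternions) `DualNumber (Quaternion ℝ)`. -/
noncomputable def dm {p q : ℕ} (A0 A1 : QM p q) :
    Matrix (Fin p) (Fin q) (DualNumber (Quaternion ℝ)) :=
  A0.map TrivSqZeroExt.inl + A1.map TrivSqZeroExt.inr

/-- The rank of a quaternion matrix: the dimension (over `ℍ`) of the left
`ℍ`-submodule spanned by its rows. -/
noncomputable def qrank {m n : Type*} (A : Matrix m n (Quaternion ℝ)) : ℕ :=
  Module.finrank (Quaternion ℝ)
    (Submodule.span (Quaternion ℝ) (Set.range (fun i : m => fun j : n => A i j)))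

namespace Matrix

variable {R : Type*} [Ring R] {m n p : Type*} [Fintype m] [Fintype n] [DecidableEq n]
  {A : Matrix m n R} {G : Matrix n m R}

theorem mul_mul_sub_mul_eq_zero (hG : A * G * A = A) (X : Matrix p m R) :
    X * A * (1 - G * A) = 0 := by
  rw [Matrix.mul_assoc, Matrix.mul_sub, Matrix.mul_one, ← Matrix.mul_assoc, hG, sub_self,
    Matrix.mul_zero]

theorem exists_mul_eq_iff (hG : A * G * A = A) (D : Matrix p n R) :
    (∃ X : Matrix p m R, X * A = D) ↔ D * (1 - G * A) = 0 := by
  refine ⟨fun ⟨X, hX⟩ => hX ▸ mul_mul_sub_mul_eq_zero hG X, fun hD => ⟨D * G, ?_⟩⟩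
  rwa [Matrix.mul_sub, Matrix.mul_one, sub_eq_zero, eq_comm, ← Matrix.mul_assoc] at hD

theorem exists_mul_eq_and_iff [DecidableEq m] (hG : A * G * A = A) (D : Matrix p n R)
    (P : Matrix p m R → Prop) :
    (∃ X : Matrix p m R, X * A = D ∧ P X) ↔
      D * (1 - G * A) = 0 ∧ ∃ W : Matrix p m R, P (D * G + W * (1 - A * G)) := by
  constructor
  · rintro ⟨X, rfl, hPX⟩
    refine ⟨mul_mul_sub_mul_eq_zero hG X, X, ?_⟩
    rwa [Matrix.mul_sub, Matrix.mul_one, Matrix.mul_assoc, add_sub_cancel]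
  · rintro ⟨hD, W, hPW⟩
    refine ⟨_, ?_, hPW⟩
    obtain ⟨X, rfl⟩ := (exists_mul_eq_iff hG D).2 hD
    rw [Matrix.add_mul, Matrix.mul_assoc W, Matrix.sub_mul, Matrix.one_mul, hG, sub_self,
      Matrix.mul_zero, add_zero, Matrix.mul_assoc, Matrix.mul_assoc, ← Matrix.mul_assoc A, hG]

end Matrix

theorem dm_apply_fst {p q : ℕ} (A0 A1 : QM p q) (i : Fin p) (j : Fin q) :
    (dm A0 A1 i j).fst = A0 i j := by
  simp [dm]

theorem dm_apply_snd {p q : ℕ} (A0 A1 : QM p q) (i : Fin p) (j : Fin q) :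
    (dm A0 A1 i j).snd = A1 i j := by
  simp [dm]

theorem dm_surjective {p q : ℕ} (Y : Matrix (Fin p) (Fin q) (DualNumber (Quaternion ℝ))) :
    ∃ Y0 Y1, Y = dm Y0 Y1 :=
  ⟨Y.map TrivSqZeroExt.fst, Y.map TrivSqZeroExt.snd,
    Matrix.ext fun i j => TrivSqZeroExt.ext (by simp [dm_apply_fst]) (by simp [dm_apply_snd])⟩

theorem dm_inj {p q : ℕ} {A0 A1 C0 C1 : QM p q} :
    dm A0 A1 = dm C0 C1 ↔ A0 = C0 ∧ A1 = C1 := by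
  refine ⟨fun h => ⟨Matrix.ext fun i j => ?_, Matrix.ext fun i j => ?_⟩,
    fun ⟨h0, h1⟩ => h0 ▸ h1 ▸ rfl⟩
  · simpa [dm_apply_fst] using congrArg (fun M => (M i j).fst) h
  · simpa [dm_apply_snd] using congrArg (fun M => (M i j).snd) h

theorem dm_mul_dm {p q r : ℕ} (A0 A1 : QM p q) (B0 B1 : QM q r) :
    dm A0 A1 * dm B0 B1 = dm (A0 * B0) (A0 * B1 + A1 * B0) := by
  refine Matrix.ext fun i j => TrivSqZeroExt.ext ?_ ?_
  · rw [Matrix.mul_apply, TrivSqZeroExt.fst_sum, dm_apply_fst]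
    simp [dm_apply_fst, Matrix.mul_apply]
  · rw [Matrix.mul_apply, TrivSqZeroExt.snd_sum, dm_apply_snd]
    simp only [TrivSqZeroExt.snd_mul, dm_apply_fst, dm_apply_snd, smul_eq_mul,
      MulOpposite.smul_eq_mul_unop, MulOpposite.unop_op, Matrix.add_apply, Matrix.mul_apply]
    rw [Finset.sum_add_distrib]

theorem exists_mul_dm_eq_dm_iff {k l n : ℕ} (B0 B1 : QM k l) (C0 C1 : QM n l) :
    (∃ Y : Matrix (Fin n) (Fin k) (DualNumber (Quaternion ℝ)), Y * dm B0 B1 = dm C0 C1) ↔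
      ∃ Y0 Y1 : QM n k, Y0 * B0 = C0 ∧ Y1 * B0 = C1 - Y0 * B1 := by
  constructor
  · rintro ⟨Y, hY⟩
    obtain ⟨Y0, Y1, rfl⟩ := dm_surjective Y
    obtain ⟨h0, h1⟩ := dm_inj.1 (dm_mul_dm Y0 Y1 B0 B1 ▸ hY)
    exact ⟨Y0, Y1, h0, by rw [← h1, add_sub_cancel_left]⟩
  · rintro ⟨Y0, Y1, h0, h1⟩
    exact ⟨dm Y0 Y1, by rw [dm_mul_dm, dm_inj, h1, add_sub_cancel]; exact ⟨h0, rfl⟩⟩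

/-- solvability of the dual quaternion matrix equation `Y B = C`. -/
theorem stmt14 {k l n : ℕ}
    (B0 B1 : QM k l) (C0 C1 : QM n l)
    (B0d : QM l k) (hB0d : IsMP B0 B0d)
    (B2 : QM k l) (hB2 : B2 = (1 - B0 * B0d) * B1)
    (C2 : QM n l) (hC2 : C2 = C1 - C0 * B0d * B1)
    (B00 : QM k l) (hB00 : B00 = B2 * (1 - B0d * B0))
    (B00d : QM l k) (hB00d : IsMP B00 B00d)
    (C00 : QM n l) (hC00 : C00 = C2 * (1 - B0d * B0)) :
    (∃ Y : Matrix (Fin n) (Fin k) (DualNumber (Quaternion ℝ)),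
        Y * dm B0 B1 = dm C0 C1) ↔
      (C0 * (1 - B0d * B0) = 0 ∧ C00 * (1 - B00d * B00) = 0) := by
  have hresidual (W : QM n k) :
      (C1 - (C0 * B0d + W * (1 - B0 * B0d)) * B1) * (1 - B0d * B0) = C00 - W * B00 := by
    simp only [hC00, hC2, hB00, hB2, Matrix.sub_mul, Matrix.add_mul, Matrix.mul_assoc]
    abel
  calc (∃ Y : Matrix (Fin n) (Fin k) (DualNumber (Quaternion ℝ)), Y * dm B0 B1 = dm C0 C1)
      ↔ ∃ Y0 : QM n k, Y0 * B0 = C0 ∧ (C1 - Y0 * B1) * (1 - B0d * B0) = 0 := by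
        simp only [exists_mul_dm_eq_dm_iff, exists_and_left, exists_mul_eq_iff hB0d.1]
    _ ↔ C0 * (1 - B0d * B0) = 0 ∧ ∃ W : QM n k, W * B00 = C00 := by
        rw [exists_mul_eq_and_iff hB0d.1]
        exact and_congr_right fun _ => exists_congr fun W => by rw [hresidual, sub_eq_zero, eq_comm]
    _ ↔ C0 * (1 - B0d * B0) = 0 ∧ C00 * (1 - B00d * B00) = 0 := by
        rw [exists_mul_eq_iff hB00d.1]
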